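/- Let $1 < p < \infty$. There exists $\tau = \tau(p) \in (0, 1/2)$ such that if $\sigma$ and $\omega$ are $\tau$-doubling measures on $\mathbb{R}^n$, then the two-tailed Muckenhoupt characteristic is controlled by the scalar one: $\mathcal{A}_p(\sigma, \omega) \lesssim A_p(\sigma, \omega)$. -/

import Mathlib

open MeasureTheory Set ENNReal

/-- The axis-parallel half-open cube with corner `a` and sidelength `l`. -/
def cubeSet {n : ℕ} (a : Fin n → ℝ) (l : ℝ) : Set (Fin n → ℝ) :=
  {x | ∀ i, x i ∈ Set.Ico (a i) (a i + l)}

/-- The child of the cube with corner `a` and sidelength `l` selected by `ε`: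
one of the `2^n` subcubes of sidelength `l/2` obtained by halving along all
coordinate hyperplanes. -/
def childCube {n : ℕ} (a : Fin n → ℝ) (l : ℝ) (ε : Fin n → Bool) : Set (Fin n → ℝ) :=
  cubeSet (fun i => a i + (if ε i then l / 2 else 0)) (l / 2)

/-- A measure is `τ`-doubling: the measures of any two children of any cube are
within a factor `1 + τ` of each other. -/
def TauDoubling {n : ℕ} (μ : Measure (Fin n → ℝ)) (τ : ℝ) : Prop :=
  ∀ (a : Fin n → ℝ) (l : ℝ), 0 < l → ∀ ε₁ ε₂ : Fin n → Bool,
    μ (childCube a l ε₁) ≤ ENNReal.ofReal (1 + τ) * μ (childCube a l ε₂)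

/-- The scalar two-weight Muckenhoupt characteristic `A_p(σ,ω)`. -/
noncomputable def scalarAp (n : ℕ) (p p' : ℝ) (σ ω : Measure (Fin n → ℝ)) : ℝ≥0∞ :=
  ⨆ (a : Fin n → ℝ) (l : ℝ) (_ : 0 < l),
    (σ (cubeSet a l) / ENNReal.ofReal (l ^ n)) ^ (1 / p') *
    (ω (cubeSet a l) / ENNReal.ofReal (l ^ n)) ^ (1 / p)

/-- The two-tailed Muckenhoupt characteristic `𝒜_p(σ,ω)`. -/
noncomputable def tailedAp (n : ℕ) (p p' : ℝ) (σ ω : Measure (Fin n → ℝ)) : ℝ≥0∞ :=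
  ⨆ (a : Fin n → ℝ) (l : ℝ) (_ : 0 < l),
    ((ENNReal.ofReal (l ^ n))⁻¹ *
      ∫⁻ x, ENNReal.ofReal ((l ^ n / (l + Metric.infDist x (cubeSet a l)) ^ n) ^ p) ∂ω) ^ (1 / p) *
    ((ENNReal.ofReal (l ^ n))⁻¹ *
      ∫⁻ x, ENNReal.ofReal ((l ^ n / (l + Metric.infDist x (cubeSet a l)) ^ n) ^ p') ∂σ) ^ (1 / p')

/-!
A `τ`-doubling measure has doubling constant `D = 2ⁿ(1 + τ)`, which is `< 2^{nq}` for
`q = p, p'` once `τ` is small. Doubling `Q` so that each cube is alternately the upper and the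
lower child of the next produces cubes `Q = P₀ ⊆ P₁ ⊆ ⋯` of sidelength `2ᵏℓ(Q)` such that
`P_k` contains the `2ᵏℓ(Q)/6`-neighbourhood of `Q` for `k ≥ 2`. Hence `μ(P_k) ≤ Dᵏ μ(Q)`
while the tail kernel `(ℓⁿ / (ℓ + dist(x, Q))ⁿ)^q` is `≲ 2^{-knq}` off `P_k`; summing over the
annuli `P_{k+1} \ P_k` gives `∫ kernel^q dμ ≲ μ(Q)`, a geometric series in `D / 2^{nq}`.
This bounds each factor of `𝒜_p(σ, ω)` by the corresponding factor of `A_p(σ, ω)`.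
-/

section Cubes

variable {n : ℕ}

lemma childCube_subset_cubeSet (a : Fin n → ℝ) (l : ℝ) (ε : Fin n → Bool) :
    childCube a l ε ⊆ cubeSet a l := by
  intro x hx i
  obtain ⟨h₁, h₂⟩ := hx i
  by_cases hε : ε i <;> simp only [hε, if_true, Bool.false_eq_true, if_false] at h₁ h₂ <;>
    constructor <;> linarith

lemma cubeSet_subset_iUnion_childCube (a : Fin n → ℝ) (l : ℝ) :
    cubeSet a l ⊆ ⋃ ε, childCube a l ε := by
  intro x hx
  refine mem_iUnion.mpr ⟨fun i => decide (a i + l / 2 ≤ x i), fun i => ?_⟩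
  obtain ⟨h₁, h₂⟩ := hx i
  by_cases h : a i + l / 2 ≤ x i
  · simp only [h, decide_true, if_true]
    exact ⟨h, by linarith⟩
  · simp only [h, decide_false, Bool.false_eq_true, if_false]
    exact ⟨by linarith, by linarith⟩

noncomputable def doublingConst (n : ℕ) (τ : ℝ) : ℝ≥0∞ := 2 ^ n * ENNReal.ofReal (1 + τ)

lemma TauDoubling.measure_cubeSet_le {μ : Measure (Fin n → ℝ)} {τ : ℝ} (hμ : TauDoubling μ τ)
    (a : Fin n → ℝ) {l : ℝ} (hl : 0 < l) (ε : Fin n → Bool) :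
    μ (cubeSet a l) ≤ doublingConst n τ * μ (childCube a l ε) :=
  calc μ (cubeSet a l) ≤ μ (⋃ ε', childCube a l ε') :=
        measure_mono (cubeSet_subset_iUnion_childCube a l)
    _ ≤ ∑ ε', μ (childCube a l ε') := measure_iUnion_fintype_le μ _
    _ ≤ ∑ _ε' : Fin n → Bool, ENNReal.ofReal (1 + τ) * μ (childCube a l ε) :=
        Finset.sum_le_sum fun ε' _ => hμ a l hl ε' ε
    _ = doublingConst n τ * μ (childCube a l ε) := by
        simp [doublingConst, mul_assoc]

end Cubes

section ExpandingCubes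

/-- How far, in units of `ℓ(Q)`, the lower corner of the `k`-th expanding cube lies below that of
`Q`. Alternating between upper and lower children keeps `Q` away from both faces. -/
def cornerShift : ℕ → ℕ
  | 0 => 0
  | k + 1 => cornerShift k + if Odd k then 2 ^ k else 0

lemma three_mul_cornerShift_add_two (k : ℕ) :
    3 * cornerShift k + 2 = if Even k then 2 ^ (k + 1) else 2 ^ k := by
  induction k with
  | zero => rfl
  | succ k ih =>
    rcases Nat.even_or_odd k with hk | hk
    · have hk' : ¬Even (k + 1) := Nat.not_even_iff_odd.mpr hk.add_one
      simp only [cornerShift, Nat.not_odd_iff_even.mpr hk, if_false, hk'] at ih ⊢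
      simpa [hk] using ih
    · have hk' : ¬Even k := Nat.not_even_iff_odd.mpr hk
      simp only [cornerShift, hk, if_true, hk', if_false, hk.add_one] at ih ⊢
      rw [pow_succ, pow_succ]
      omega

lemma cornerShift_bounds {k : ℕ} (hk : 2 ≤ k) :
    2 ^ k ≤ 6 * cornerShift k ∧ 6 * cornerShift k + 6 + 2 ^ k ≤ 6 * 2 ^ k := by
  have h4 : 2 ^ 2 ≤ 2 ^ k := Nat.pow_le_pow_right two_pos hk
  have h := three_mul_cornerShift_add_two k
  split_ifs at h <;> rw [pow_succ] at * <;> omega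

variable {n : ℕ}

def expandingCube (a : Fin n → ℝ) (l : ℝ) (k : ℕ) : Set (Fin n → ℝ) :=
  cubeSet (fun i => a i - l * cornerShift k) (2 ^ k * l)

lemma expandingCube_zero (a : Fin n → ℝ) (l : ℝ) : expandingCube a l 0 = cubeSet a l := by
  simp [expandingCube, cornerShift]

lemma expandingCube_eq_childCube (a : Fin n → ℝ) (l : ℝ) (k : ℕ) :
    expandingCube a l k = childCube (fun i => a i - l * cornerShift (k + 1)) (2 ^ (k + 1) * l)
      fun _ => decide (Odd k) := by
  have hcorner (i : Fin n) : a i - l * cornerShift (k + 1) +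
      (if decide (Odd k) then 2 ^ (k + 1) * l / 2 else 0) = a i - l * cornerShift k := by
    by_cases hk : Odd k
    · simp [cornerShift, hk]
      ring
    · simp [cornerShift, hk]
  simp only [expandingCube, childCube, hcorner]
  congr 1
  ring

lemma expandingCube_mono (a : Fin n → ℝ) (l : ℝ) :
    Monotone (expandingCube a l) :=
  monotone_nat_of_le_succ fun k => by
    rw [expandingCube_eq_childCube]
    exact childCube_subset_cubeSet _ _ _

lemma TauDoubling.measure_expandingCube_le {μ : Measure (Fin n → ℝ)} {τ : ℝ}
    (hμ : TauDoubling μ τ) (a : Fin n → ℝ) {l : ℝ} (hl : 0 < l) (k : ℕ) :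
    μ (expandingCube a l k) ≤ doublingConst n τ ^ k * μ (cubeSet a l) := by
  induction k with
  | zero => simp [expandingCube_zero]
  | succ k ih =>
    calc μ (expandingCube a l (k + 1))
        ≤ doublingConst n τ * μ (expandingCube a l k) := by
          rw [expandingCube_eq_childCube a l k]
          exact hμ.measure_cubeSet_le _ (by positivity) _
      _ ≤ doublingConst n τ * (doublingConst n τ ^ k * μ (cubeSet a l)) := by gcongr
      _ = doublingConst n τ ^ (k + 1) * μ (cubeSet a l) := by ring

lemma mem_expandingCube_of_dist_lt {a : Fin n → ℝ} {l : ℝ} (hl : 0 < l) {k : ℕ} (hk : 2 ≤ k)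
    {x y : Fin n → ℝ} (hy : y ∈ cubeSet a l) (hxy : 6 * dist x y < 2 ^ k * l) :
    x ∈ expandingCube a l k := by
  obtain ⟨hlow, hupp⟩ := cornerShift_bounds hk
  have hlow' : (2 : ℝ) ^ k * l ≤ 6 * cornerShift k * l := by
    gcongr; exact_mod_cast hlow
  have hupp' : (6 * cornerShift k + 6 + 2 ^ k : ℝ) * l ≤ 6 * 2 ^ k * l := by
    gcongr; exact_mod_cast hupp
  intro i
  obtain ⟨hy₁, hy₂⟩ := hy i
  have hxi : |x i - y i| < 2 ^ k * l / 6 := by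
    have := Real.dist_eq (x i) (y i) ▸ dist_le_pi_dist x y i
    linarith
  rw [abs_lt] at hxi
  constructor <;> dsimp only <;> linarith

lemma le_infDist_of_notMem_expandingCube {a : Fin n → ℝ} {l : ℝ} (hl : 0 < l) {k : ℕ}
    (hk : 2 ≤ k) {x : Fin n → ℝ} (hx : x ∉ expandingCube a l k) :
    2 ^ k * l ≤ 6 * Metric.infDist x (cubeSet a l) := by
  have hne : (cubeSet a l).Nonempty := ⟨a, fun i => ⟨le_rfl, by linarith⟩⟩
  by_contra! h
  obtain ⟨y, hy, hxy⟩ := (Metric.infDist_lt_iff hne).mp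
    (show Metric.infDist x (cubeSet a l) < 2 ^ k * l / 6 by linarith)
  exact hx (mem_expandingCube_of_dist_lt hl hk hy (by linarith))

lemma exists_mem_expandingCube (a : Fin n → ℝ) {l : ℝ} (hl : 0 < l) (x : Fin n → ℝ) :
    ∃ k, x ∈ expandingCube a l (k + 2) := by
  obtain ⟨k, hk⟩ := pow_unbounded_of_one_lt (6 * dist x a / l) (one_lt_two (α := ℝ))
  refine ⟨k, mem_expandingCube_of_dist_lt hl (by omega) (y := a)
    (fun i => ⟨le_rfl, by linarith⟩) ?_⟩
  rw [div_lt_iff₀ hl] at hk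
  calc 6 * dist x a < 2 ^ k * l := hk
    _ ≤ 2 ^ (k + 2) * l := by gcongr <;> [norm_num; omega]

end ExpandingCubes

section TailIntegral

lemma lintegral_le_tsum_mul_measure_of_monotone {α : Type*} [MeasurableSpace α]
    {μ : Measure α} {S : ℕ → Set α} (hS : Monotone S) (hcover : ∀ x, ∃ k, x ∈ S k)
    {f : α → ℝ≥0∞} {b : ℕ → ℝ≥0∞} (hb₀ : ∀ x, f x ≤ b 0)
    (hb : ∀ k, ∀ x ∉ S k, f x ≤ b (k + 1)) :
    ∫⁻ x, f x ∂μ ≤ ∑' k, b k * μ (S k) := by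
  have hU : ⋃ k, disjointed S k = univ := by
    rw [iUnion_disjointed]
    exact eq_univ_of_forall fun x => mem_iUnion.mpr (hcover x)
  have hf : ∀ k, ∀ x ∈ disjointed S k, f x ≤ b k
    | 0, x, _ => hb₀ x
    | k + 1, x, hx => by
      rw [← Order.succ_eq_add_one, hS.disjointed_succ (not_isMax k)] at hx
      exact hb k x hx.2
  calc ∫⁻ x, f x ∂μ = ∫⁻ x in ⋃ k, disjointed S k, f x ∂μ := by rw [hU, setLIntegral_univ]
    _ ≤ ∑' k, ∫⁻ x in disjointed S k, f x ∂μ := lintegral_iUnion_le _ _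
    _ ≤ ∑' k, ∫⁻ _ in disjointed S k, b k ∂μ :=
        ENNReal.tsum_le_tsum fun k => setLIntegral_mono measurable_const (hf k)
    _ ≤ ∑' k, b k * μ (S k) := by
        gcongr with k
        rw [setLIntegral_const]
        gcongr
        exact disjointed_le S k

lemma ofReal_three_div_two_pow_rpow (n j : ℕ) (q : ℝ) :
    ENNReal.ofReal (((3 / 2 ^ j) ^ n) ^ q) =
      ENNReal.ofReal ((3 ^ n) ^ q) * (ENNReal.ofReal ((2 ^ n) ^ q))⁻¹ ^ j := by
  have hreal : ((3 / 2 ^ j : ℝ) ^ n) ^ q = (3 ^ n) ^ q * (((2 ^ n) ^ q)⁻¹) ^ j := by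
    rw [div_pow, ← pow_mul, mul_comm j, pow_mul, Real.div_rpow (by positivity) (by positivity),
      ← Real.rpow_pow_comm (x := 2 ^ n) (by positivity) q j, div_eq_mul_inv, inv_pow]
  rw [hreal, ENNReal.ofReal_mul (by positivity), ENNReal.ofReal_pow (by positivity),
    ENNReal.ofReal_inv_of_pos (by positivity)]

variable {n : ℕ}

noncomputable def tailKernel (a : Fin n → ℝ) (l : ℝ) (x : Fin n → ℝ) : ℝ :=
  l ^ n / (l + Metric.infDist x (cubeSet a l)) ^ n

lemma tailKernel_rpow_le {a : Fin n → ℝ} {l q : ℝ} (hl : 0 < l) (hq : 0 ≤ q)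
    {x : Fin n → ℝ} {j : ℕ} (hj : 2 ^ j * l ≤ 3 * (l + Metric.infDist x (cubeSet a l))) :
    tailKernel a l x ^ q ≤ ((3 / 2 ^ j) ^ n) ^ q := by
  have hd := Metric.infDist_nonneg (x := x) (s := cubeSet a l)
  have hratio : l / (l + Metric.infDist x (cubeSet a l)) ≤ 3 / 2 ^ j := by
    rw [div_le_div_iff₀ (by positivity) (by positivity)]
    linarith
  rw [tailKernel, ← div_pow]
  gcongr

lemma TauDoubling.lintegral_tailKernel_le {μ : Measure (Fin n → ℝ)} {τ q : ℝ}
    (hμ : TauDoubling μ τ) (hq : 0 ≤ q) (a : Fin n → ℝ) {l : ℝ} (hl : 0 < l) :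
    ∫⁻ x, ENNReal.ofReal (tailKernel a l x ^ q) ∂μ ≤
      ENNReal.ofReal ((3 ^ n) ^ q) * doublingConst n τ ^ 2 *
        (1 - doublingConst n τ * (ENNReal.ofReal ((2 ^ n) ^ q))⁻¹)⁻¹ * μ (cubeSet a l) := by
  set D := doublingConst n τ
  set r := (ENNReal.ofReal ((2 ^ n) ^ q))⁻¹
  set b : ℕ → ℝ≥0∞ := fun j => ENNReal.ofReal (((3 / 2 ^ j) ^ n) ^ q)
  have hkernel (j : ℕ) (x : Fin n → ℝ)
      (hx : 2 ^ j * l ≤ 3 * (l + Metric.infDist x (cubeSet a l))) :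
      ENNReal.ofReal (tailKernel a l x ^ q) ≤ b j :=
    ENNReal.ofReal_le_ofReal (tailKernel_rpow_le hl hq hx)
  calc _ ≤ ∑' j, b j * μ (expandingCube a l (j + 2)) := by
        refine lintegral_le_tsum_mul_measure_of_monotone
          (fun _ _ h => expandingCube_mono a l (by omega))
          (exists_mem_expandingCube a hl) (fun x => hkernel 0 x ?_) (fun j x hx => hkernel _ x ?_)
        all_goals have hd := Metric.infDist_nonneg (x := x) (s := cubeSet a l)
        · linarith
        · have hfar := le_infDist_of_notMem_expandingCube hl (Nat.le_add_left 2 j) hx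
          rw [pow_succ 2 (j + 1)] at hfar
          linarith
    _ ≤ ∑' j, ENNReal.ofReal ((3 ^ n) ^ q) * D ^ 2 * μ (cubeSet a l) * (D * r) ^ j := by
        refine ENNReal.tsum_le_tsum fun j => ?_
        calc b j * μ (expandingCube a l (j + 2))
            ≤ b j * (D ^ (j + 2) * μ (cubeSet a l)) := by
              gcongr; exact hμ.measure_expandingCube_le a hl _
          _ = _ := by
              simp only [b, ofReal_three_div_two_pow_rpow n j q, mul_pow, pow_add]
              ring
    _ = _ := by
        rw [ENNReal.tsum_mul_left, ENNReal.tsum_geometric]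
        ring

end TailIntegral

section Constants

lemma doublingConst_lt_ofReal_two_pow_rpow {n : ℕ} (hn : 1 ≤ n) {τ q : ℝ} (hq : 1 < q)
    (hτq : 1 + τ < 2 ^ (q - 1)) : doublingConst n τ < ENNReal.ofReal ((2 ^ n) ^ q) := by
  have hexp : (2 : ℝ) ^ (q - 1) ≤ (2 ^ n) ^ (q - 1) :=
    Real.rpow_le_rpow (by norm_num) (le_self_pow₀ one_le_two (by omega)) (by linarith)
  have hsplit : ((2 : ℝ) ^ n) ^ q = 2 ^ n * (2 ^ n) ^ (q - 1) := by
    rw [Real.rpow_sub (by positivity), Real.rpow_one]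
    field_simp
  have hlt : (2 : ℝ) ^ n * (1 + τ) < (2 ^ n) ^ q := by
    rw [hsplit]
    gcongr
    linarith
  rw [doublingConst, ← ENNReal.ofReal_ofNat 2, ← ENNReal.ofReal_pow (by norm_num),
    ← ENNReal.ofReal_mul (by positivity)]
  exact (ENNReal.ofReal_lt_ofReal_iff (by positivity)).mpr hlt

lemma exists_lintegral_tailKernel_le {n : ℕ} (hn : 1 ≤ n) {τ q : ℝ} (hτ : 0 < τ) (hq : 1 < q)
    (hτq : 1 + τ < 2 ^ (q - 1)) :
    ∃ K : ℝ≥0∞, 0 < K ∧ K < ∞ ∧ ∀ μ : Measure (Fin n → ℝ), TauDoubling μ τ →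
      ∀ (a : Fin n → ℝ) (l : ℝ), 0 < l →
        ∫⁻ x, ENNReal.ofReal (tailKernel a l x ^ q) ∂μ ≤ K * μ (cubeSet a l) := by
  have hD : doublingConst n τ ≠ 0 := mul_ne_zero (by simp) (by simp; linarith)
  have hD_top : doublingConst n τ ≠ ∞ := ENNReal.mul_ne_top (by simp) ENNReal.ofReal_ne_top
  have hρ : doublingConst n τ * (ENNReal.ofReal ((2 ^ n) ^ q))⁻¹ < 1 := by
    rw [← div_eq_mul_inv]
    refine ENNReal.div_lt_of_lt_mul ?_
    simpa only [one_mul] using doublingConst_lt_ofReal_two_pow_rpow hn hq hτq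
  refine ⟨_, ?_, ?_, fun μ hμ a l hl => hμ.lintegral_tailKernel_le (by linarith) a hl⟩
  · have h₃ : ENNReal.ofReal ((3 ^ n) ^ q) ≠ 0 := (ENNReal.ofReal_pos.mpr (by positivity)).ne'
    have hinv : (1 - doublingConst n τ * (ENNReal.ofReal ((2 ^ n) ^ q))⁻¹)⁻¹ ≠ 0 :=
      ENNReal.inv_ne_zero.mpr (ENNReal.sub_ne_top ENNReal.one_ne_top)
    exact pos_iff_ne_zero.mpr (mul_ne_zero (mul_ne_zero h₃ (pow_ne_zero 2 hD)) hinv)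
  · refine ENNReal.mul_lt_top (ENNReal.mul_lt_top ENNReal.ofReal_lt_top
      (ENNReal.pow_lt_top hD_top.lt_top)) ?_
    exact ENNReal.inv_lt_top.mpr (tsub_pos_iff_lt.mpr hρ)

lemma exists_pos_lt_half_one_add_lt_two_rpow {p p' : ℝ} (hp : 1 < p) (hp' : 1 < p') :
    ∃ τ : ℝ, 0 < τ ∧ τ < 1 / 2 ∧ 1 + τ < 2 ^ (p - 1) ∧ 1 + τ < 2 ^ (p' - 1) := by
  have h₁ : 1 < (2 : ℝ) ^ (p - 1) := Real.one_lt_rpow one_lt_two (by linarith)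
  have h₂ : 1 < (2 : ℝ) ^ (p' - 1) := Real.one_lt_rpow one_lt_two (by linarith)
  set m := min ((2 ^ (p - 1) - 1) / 2) ((2 ^ (p' - 1) - 1) / 2 : ℝ)
  have hm₁ : m ≤ (2 ^ (p - 1) - 1) / 2 := min_le_left _ _
  have hm₂ : m ≤ (2 ^ (p' - 1) - 1) / 2 := min_le_right _ _
  refine ⟨min (1 / 4) m, lt_min (by norm_num) (lt_min (by linarith) (by linarith)),
    (min_le_left _ _).trans_lt (by norm_num), ?_, ?_⟩ <;>
  linarith [min_le_right (1 / 4 : ℝ) m]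

end Constants

lemma tailedAp_le_mul_scalarAp {n : ℕ} {p p' : ℝ} (hp : 0 ≤ p) (hp' : 0 ≤ p')
    {σ ω : Measure (Fin n → ℝ)} {K K' : ℝ≥0∞}
    (hω : ∀ (a : Fin n → ℝ) (l : ℝ), 0 < l →
      ∫⁻ x, ENNReal.ofReal (tailKernel a l x ^ p) ∂ω ≤ K * ω (cubeSet a l))
    (hσ : ∀ (a : Fin n → ℝ) (l : ℝ), 0 < l →
      ∫⁻ x, ENNReal.ofReal (tailKernel a l x ^ p') ∂σ ≤ K' * σ (cubeSet a l)) :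
    tailedAp n p p' σ ω ≤ K ^ (1 / p) * K' ^ (1 / p') * scalarAp n p p' σ ω := by
  refine iSup₂_le fun a l => iSup_le fun hl => ?_
  set L := ENNReal.ofReal (l ^ n)
  have hnormalize {I C m : ℝ≥0∞} (h : I ≤ C * m) : L⁻¹ * I ≤ C * (m / L) :=
    calc L⁻¹ * I ≤ L⁻¹ * (C * m) := by gcongr
      _ = C * (m / L) := by rw [div_eq_mul_inv]; ring
  calc _ ≤ (K * (ω (cubeSet a l) / L)) ^ (1 / p) * (K' * (σ (cubeSet a l) / L)) ^ (1 / p') := by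
        gcongr ?_ ^ _ * ?_ ^ _
        · exact hnormalize (hω a l hl)
        · exact hnormalize (hσ a l hl)
    _ = K ^ (1 / p) * K' ^ (1 / p') *
          ((σ (cubeSet a l) / L) ^ (1 / p') * (ω (cubeSet a l) / L) ^ (1 / p)) := by
        rw [ENNReal.mul_rpow_of_nonneg _ _ (by positivity),
          ENNReal.mul_rpow_of_nonneg _ _ (by positivity)]
        ring
    _ ≤ K ^ (1 / p) * K' ^ (1 / p') * scalarAp n p p' σ ω := by
        gcongr
        exact le_iSup₂_of_le a l (le_iSup_of_le hl le_rfl)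

/-- For `1 < p < ∞` there is `τ = τ(p) ∈ (0,1/2)` such that for all `τ`-doubling
measures `σ, ω`, one has `𝒜_p(σ,ω) ≲ A_p(σ,ω)`. -/
theorem stmt5 (n : ℕ) (hn : 1 ≤ n) (p p' : ℝ) (hp : 1 < p) (hpp' : 1 / p + 1 / p' = 1) :
    ∃ τ : ℝ, 0 < τ ∧ τ < 1 / 2 ∧
      ∃ C : ℝ≥0∞, 0 < C ∧ C < ∞ ∧
        ∀ (σ ω : Measure (Fin n → ℝ)) [IsLocallyFiniteMeasure σ] [IsLocallyFiniteMeasure ω],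
          TauDoubling σ τ → TauDoubling ω τ →
          tailedAp n p p' σ ω ≤ C * scalarAp n p p' σ ω := by
  have hpp : p.HolderConjugate p' :=
    Real.holderConjugate_iff.mpr ⟨hp, by simpa only [one_div] using hpp'⟩
  obtain ⟨τ, hτ, hτ_half, hτp, hτp'⟩ := exists_pos_lt_half_one_add_lt_two_rpow hp hpp.symm.lt
  obtain ⟨K, hK, hK_top, hKω⟩ := exists_lintegral_tailKernel_le hn hτ hp hτp
  obtain ⟨K', hK', hK'_top, hKσ⟩ := exists_lintegral_tailKernel_le hn hτ hpp.symm.lt hτp'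
  refine ⟨τ, hτ, hτ_half, K ^ (1 / p) * K' ^ (1 / p'), ?_, ?_, fun σ ω _ _ hσ hω => ?_⟩
  · exact ENNReal.mul_pos (ENNReal.rpow_pos hK hK_top.ne).ne'
      (ENNReal.rpow_pos hK' hK'_top.ne).ne'
  · exact ENNReal.mul_lt_top
      (ENNReal.rpow_lt_top_of_nonneg (one_div_nonneg.mpr hpp.pos.le) hK_top.ne)
      (ENNReal.rpow_lt_top_of_nonneg (one_div_nonneg.mpr hpp.symm.pos.le) hK'_top.ne)
  · exact tailedAp_le_mul_scalarAp hpp.pos.le hpp.symm.pos.le (hKω ω hω) (hKσ σ hσ)
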